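/- arXiv:1902.08077 — 5 statements merged into one kernel-verified Lean document; each statement's English description precedes it below -/
import Mathlib

section
/- Let M ∈ ℝ^{K×K} be a matrix, and let b_1 < b_2 < … < b_T be the distinct entries of M. Suppose there exists a function f : ℝ → ℝ such that det(f(M)) ≠ 0, where f(M) denotes entrywise application. Let ε = (1/4)·min_{i>1}(b_i − b_{i−1}). Then there exist c_i ∈ [b_i − ε, b_i + ε] for each i such that every function h : ℝ → ℝ with h(b_i) = c_i for all i satisfies det(h(M)) ≠ 0. -/
/-!
Along the segment `t ↦ M + t • (f(M) - M)` the determinant is a polynomial in `t`, nonzero at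
`t = 1`, so it vanishes only at finitely many `t`. Take `t > 0` small and not a root, and
`c_i = b_i + t (f(b_i) - b_i)`: any `h` with `h(b_i) = c_i` has `h(M) = M + t • (f(M) - M)`.
-/

open Polynomial Filter Topology

namespace Matrix

variable {n : Type*} [Fintype n] [DecidableEq n]

theorem eval_det_map_C_add_X_smul {R : Type*} [CommRing R] (A B : Matrix n n R) (t : R) :
    (A.map C + (X : R[X]) • B.map C).det.eval t = (A + t • B).det := by
  rw [← coe_evalRingHom, RingHom.map_det]
  congr 1
  ext i j
  simp only [RingHom.mapMatrix_apply, map_apply, add_apply, smul_apply, smul_eq_mul,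
    coe_evalRingHom, eval_add, eval_mul, eval_C, eval_X]

theorem finite_setOf_det_add_smul_sub_eq_zero {R : Type*} [CommRing R] [IsDomain R]
    (A B : Matrix n n R) (hB : B.det ≠ 0) : {t : R | (A + t • (B - A)).det = 0}.Finite := by
  set P := (A.map C + (X : R[X]) • (B - A).map C).det
  have hP : P ≠ 0 := fun h => hB <| by
    simpa [P, h] using (eval_det_map_C_add_X_smul A (B - A) 1).symm
  refine (finite_setOfPred_isRoot hP).subset fun t ht => ?_
  simpa [IsRoot, P, eval_det_map_C_add_X_smul] using ht

theorem eventually_nhdsGT_det_add_smul_sub_ne_zero {𝕜 : Type*} [Field 𝕜] [LinearOrder 𝕜]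
    [TopologicalSpace 𝕜] [T1Space 𝕜] {A B : Matrix n n 𝕜} (hB : B.det ≠ 0) :
    ∀ᶠ t in 𝓝[>] (0 : 𝕜), (A + t • (B - A)).det ≠ 0 :=
  ((finite_setOf_det_add_smul_sub_eq_zero A B hB).eventually_cofinite_notMem.filter_mono
    (nhdsNE_le_cofinite 0)).filter_mono (nhdsWithin_mono _ fun _ ht => ne_of_gt ht)

end Matrix

theorem eventually_nhds_zero_forall_add_mul_mem_Icc {ι : Type*} [Finite ι] (b d : ι → ℝ)
    {ε : ℝ} (hε : 0 < ε) :
    ∀ᶠ t in 𝓝 (0 : ℝ), ∀ s, b s + t * d s ∈ Set.Icc (b s - ε) (b s + ε) := by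
  refine eventually_all.2 fun s => ?_
  have : Tendsto (fun t : ℝ => b s + t * d s) (𝓝 0) (𝓝 (b s)) :=
    (by fun_prop : Continuous fun t : ℝ => b s + t * d s).tendsto' 0 (b s) (by simp)
  exact this.eventually (Icc_mem_nhds (by linarith) (by linarith))

theorem StrictMono.zero_lt_inf'_sub {α : Type*} [AddCommGroup α] [LinearOrder α]
    [IsOrderedAddMonoid α] {T : ℕ} {b : Fin (T + 1) → α} (hb : StrictMono b)
    (H : (Finset.univ : Finset (Fin T)).Nonempty) :
    0 < Finset.univ.inf' H (fun i : Fin T => b i.succ - b i.castSucc) :=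
  (Finset.lt_inf'_iff _).2 fun _ _ => sub_pos.2 (hb Fin.castSucc_lt_succ)

theorem existence_of_perturbed_values_general (K T : ℕ) (hT : 0 < T)
    (M : Matrix (Fin K) (Fin K) ℝ)
    (b : Fin (T + 1) → ℝ) (hb : StrictMono b)
    (hentries : ∀ i j, ∃ t, M i j = b t)
    (f : ℝ → ℝ) (hf : (M.map f).det ≠ 0)
    (ε : ℝ)
    (hε : ε = (1 / 4) *
      Finset.univ.inf' (Finset.univ_nonempty_iff.mpr ⟨⟨0, hT⟩⟩)
        (fun i : Fin T => b i.succ - b i.castSucc)) :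
    ∃ c : Fin (T + 1) → ℝ,
      (∀ t, c t ∈ Set.Icc (b t - ε) (b t + ε)) ∧
      ∀ h : ℝ → ℝ, (∀ t, h (b t) = c t) → (M.map h).det ≠ 0 := by
  have hε_pos : 0 < ε := hε ▸ mul_pos (by norm_num) (hb.zero_lt_inf'_sub _)
  obtain ⟨l, hl_det, hl_Icc⟩ := ((Matrix.eventually_nhdsGT_det_add_smul_sub_ne_zero
    (A := M) hf).and (nhdsWithin_le_nhds <| eventually_nhds_zero_forall_add_mul_mem_Icc b
      (fun t => f (b t) - b t) hε_pos)).exists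
  refine ⟨fun t => b t + l * (f (b t) - b t), hl_Icc, fun h hh => ?_⟩
  have hM : M.map h = M + l • (M.map f - M) := by
    ext i j
    obtain ⟨t, ht⟩ := hentries i j
    simp [ht, hh t]
  rwa [hM]

theorem existence_of_perturbed_values (K T : ℕ) (hT : 0 < T)
    (M : Matrix (Fin K) (Fin K) ℝ)
    (b : Fin (T + 1) → ℝ) (hb : StrictMono b)
    (hentries : ∀ i j, ∃ t, M i j = b t)
    (hsurj : ∀ t, ∃ i j, M i j = b t)
    (f : ℝ → ℝ) (hf : (M.map f).det ≠ 0)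
    (ε : ℝ)
    (hε : ε = (1 / 4) *
      Finset.univ.inf' (Finset.univ_nonempty_iff.mpr ⟨⟨0, hT⟩⟩)
        (fun i : Fin T => b i.succ - b i.castSucc)) :
    ∃ c : Fin (T + 1) → ℝ,
      (∀ t, c t ∈ Set.Icc (b t - ε) (b t + ε)) ∧
      ∀ h : ℝ → ℝ, (∀ t, h (b t) = c t) → (M.map h).det ≠ 0 :=
  existence_of_perturbed_values_general K T hT M b hb hentries f hf ε hε
end

section
/- Let A ∈ ℝ^{M×N} be any matrix. If there exists a pointwise function f : ℝ → ℝ such that the entrywise-applied matrix f(A) has rank at least K, then there also exists a strictly increasing, continuous, bijective (on ℝ), piecewise differentiable function g : ℝ → ℝ such that g(A) has rank at least K. -/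
open Matrix Filter Polynomial Function

/-!
Only the values of `g` at the finitely many entries of `A` matter. Choose `b` below all entries
and coefficients `c` such that `p x = ∑ₖ cₖ (x - b) ^ (2k + 1)` agrees with `f` at the entries:
this is a Vandermonde system in the distinct squares `(aᵢ - b) ^ 2`. Put `gₜ = p + t • q` with
`q x = ∑ₖ (x - b) ^ (2k + 1)`. For large `t` every coefficient `cₖ + t` is positive, so `gₜ` is a
smooth increasing bijection of `ℝ`. Since `gₜ(A) = f(A) + t • q(A)`, a nonzero `K × K` minor of
`f(A)` becomes a polynomial in `t` which is nonzero at `t = 0`, so it vanishes for only finitely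
many `t`.
-/

theorem exists_linearIndependent_comp_of_le_finrank_span {K V ι : Type*} [Field K]
    [AddCommGroup V] [Module K V] [Finite ι] {n : ℕ} (v : ι → V)
    (h : n ≤ Module.finrank K (Submodule.span K (Set.range v))) :
    ∃ r : Fin n → ι, LinearIndependent K (v ∘ r) := by
  obtain ⟨κ, a, ha, hspan, hli⟩ := exists_linearIndependent' K v
  have : Fintype κ := have := Finite.of_injective a ha; Fintype.ofFinite κ
  rw [← hspan, finrank_span_eq_card hli, ← Fintype.card_fin n] at h
  obtain ⟨e⟩ := Function.Embedding.nonempty_of_card_le h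
  exact ⟨a ∘ e, hli.comp e e.injective⟩

namespace Matrix

variable {m n K : Type*} [Fintype n] [Field K]

theorem exists_submatrix_det_ne_zero_of_le_rank [Fintype m] {k : ℕ} (B : Matrix m n K)
    (h : k ≤ B.rank) :
    ∃ (r : Fin k → m) (c : Fin k → n), (B.submatrix r c).det ≠ 0 := by
  rw [rank_eq_finrank_span_cols] at h
  obtain ⟨c, hc⟩ := exists_linearIndependent_comp_of_le_finrank_span B.col h
  have hrank : (B.submatrix id c).rank = k := by
    rw [← rank_transpose, LinearIndependent.rank_matrix (M := (B.submatrix id c)ᵀ) hc,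
      Fintype.card_fin]
  rw [rank_eq_finrank_span_row] at hrank
  obtain ⟨r, hr⟩ := exists_linearIndependent_comp_of_le_finrank_span _ hrank.ge
  exact ⟨r, c, ((isUnit_iff_isUnit_det _).mp
    ((linearIndependent_rows_iff_isUnit (A := B.submatrix r c)).mp hr)).ne_zero⟩

theorem le_rank_of_submatrix_det_ne_zero {k : ℕ} (B : Matrix m n K) (r : Fin k → m)
    (c : Fin k → n) (h : (B.submatrix r c).det ≠ 0) : k ≤ B.rank := by
  calc k = (B.submatrix r c).rank := by
        rw [rank_of_isUnit _ ((isUnit_iff_isUnit_det _).mpr (Ne.isUnit h)), Fintype.card_fin]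
    _ ≤ B.rank := rank_submatrix_le B r c

theorem eventually_det_add_smul_ne_zero {ι : Type*} [Fintype ι] [DecidableEq ι]
    (X Y : Matrix ι ι K) (hX : X.det ≠ 0) : ∀ᶠ t in cofinite, (X + (t : K) • Y).det ≠ 0 := by
  set P : K[X] := det ((Polynomial.X : K[X]) • Y.map C + X.map C)
  have hP : P ≠ 0 := fun h0 => hX <| by
    rw [← coeff_det_X_add_C_zero Y X]; simp [P, h0]
  have heval : ∀ t, P.eval t = (t • Y + X).det := by
    intro t
    rw [← coe_evalRingHom, RingHom.map_det]
    congr 1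
    ext i j
    simp [-X_mul_C]
  filter_upwards [(Polynomial.finite_setOfPred_isRoot hP).compl_mem_cofinite] with t ht
  rwa [add_comm, ← heval]

theorem eventually_le_rank_add_smul [Fintype m] {k : ℕ} (X Y : Matrix m n K) (hX : k ≤ X.rank) :
    ∀ᶠ t in cofinite, k ≤ (X + (t : K) • Y).rank := by
  obtain ⟨r, c, hrc⟩ := X.exists_submatrix_det_ne_zero_of_le_rank hX
  filter_upwards [eventually_det_add_smul_ne_zero _ (Y.submatrix r c) hrc] with t ht
  exact le_rank_of_submatrix_det_ne_zero _ r c (by simpa [submatrix_add, submatrix_smul] using ht)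

end Matrix

noncomputable def oddPowSum {m : ℕ} (b : ℝ) (d : Fin m → ℝ) (x : ℝ) : ℝ :=
  ∑ k, d k * (x - b) ^ (2 * (k : ℕ) + 1)

namespace oddPowSum

variable {m : ℕ} (b : ℝ) (d : Fin m → ℝ)

theorem add_const (t x : ℝ) :
    oddPowSum b (fun k => d k + t) x = oddPowSum b d x + t * oddPowSum b (1 : Fin m → ℝ) x := by
  simp only [oddPowSum, Pi.one_apply, one_mul, Finset.mul_sum, add_mul, Finset.sum_add_distrib]

theorem reflect (x : ℝ) : oddPowSum b d (2 * b - x) = -oddPowSum b d x := by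
  simp only [oddPowSum, ← Finset.sum_neg_distrib, show 2 * b - x - b = -(x - b) by ring,
    Odd.neg_pow ⟨_, rfl⟩, mul_neg]

theorem differentiable : Differentiable ℝ (oddPowSum b d) := by
  unfold oddPowSum; fun_prop

theorem continuous : Continuous (oddPowSum b d) :=
  (differentiable b d).continuous

variable {d}

theorem strictMono (hm : m ≠ 0) (hd : ∀ k, 0 < d k) : StrictMono (oddPowSum b d) := by
  have : Nonempty (Fin m) := ⟨⟨0, Nat.pos_of_ne_zero hm⟩⟩
  intro u v huv
  refine Finset.sum_lt_sum_of_nonempty Finset.univ_nonempty fun k _ => ?_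
  exact mul_lt_mul_of_pos_left (Odd.strictMono_pow ⟨k, rfl⟩ (sub_lt_sub_right huv b)) (hd k)

theorem tendsto_atTop (hm : m ≠ 0) (hd : ∀ k, 0 < d k) :
    Tendsto (oddPowSum b d) atTop atTop := by
  let k₀ : Fin m := ⟨0, Nat.pos_of_ne_zero hm⟩
  have hlin : Tendsto (fun x => d k₀ * (x - b)) atTop atTop :=
    (tendsto_atTop_add_const_right _ (-b) tendsto_id).const_mul_atTop (hd k₀)
  refine tendsto_atTop_mono' _ ?_ hlin
  filter_upwards [eventually_ge_atTop b] with x hx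
  simpa [k₀, oddPowSum] using
    Finset.single_le_sum (f := fun k => d k * (x - b) ^ (2 * (k : ℕ) + 1)) (fun k _ =>
      mul_nonneg (hd k).le (pow_nonneg (sub_nonneg.2 hx) _)) (Finset.mem_univ k₀)

theorem tendsto_atBot (hm : m ≠ 0) (hd : ∀ k, 0 < d k) :
    Tendsto (oddPowSum b d) atBot atBot := by
  have hreflect : Tendsto (fun x => 2 * b - x) atBot atTop :=
    tendsto_atTop_add_const_left _ _ tendsto_neg_atBot_atTop
  convert tendsto_neg_atTop_atBot.comp ((tendsto_atTop b hm hd).comp hreflect) using 1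
  ext x
  simp [reflect]

theorem bijective (hm : m ≠ 0) (hd : ∀ k, 0 < d k) : Bijective (oddPowSum b d) :=
  ⟨(strictMono b hm hd).injective,
    (continuous b d).surjective (tendsto_atTop b hm hd) (tendsto_atBot b hm hd)⟩

theorem exists_interpolating {a : Fin m → ℝ} (ha : Injective a) (hb : ∀ i, b < a i)
    (y : Fin m → ℝ) : ∃ c : Fin m → ℝ, ∀ i, oddPowSum b c (a i) = y i := by
  have hfac : (of fun i k : Fin m => (a i - b) ^ (2 * (k : ℕ) + 1))
      = diagonal (fun i => a i - b) * vandermonde (fun i => (a i - b) ^ 2) := by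
    ext i k
    rw [of_apply, diagonal_mul, vandermonde_apply, pow_succ, pow_mul, mul_comm]
  have hsq : Injective fun i => (a i - b) ^ 2 := fun i j hij =>
    ha (by nlinarith [hb i, hb j, hij])
  have hunit : IsUnit (of fun i k : Fin m => (a i - b) ^ (2 * (k : ℕ) + 1)) := by
    rw [isUnit_iff_isUnit_det, hfac, det_mul, det_diagonal]
    exact (IsUnit.mk0 _ (Finset.prod_ne_zero_iff.2 fun i _ => (sub_pos.2 (hb i)).ne')).mul
      (IsUnit.mk0 _ (det_vandermonde_ne_zero_iff.2 hsq))
  obtain ⟨c, hc⟩ := mulVec_surjective_iff_isUnit.2 hunit y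
  refine ⟨c, fun i => ?_⟩
  rw [← hc]
  simp [oddPowSum, mulVec, dotProduct, mul_comm]

theorem exists_eqOn_finset (S : Finset ℝ) (f : ℝ → ℝ) :
    ∃ (b : ℝ) (c : Fin S.card → ℝ), ∀ s ∈ S, oddPowSum b c s = f s := by
  obtain ⟨b, hb⟩ := S.bddBelow
  let a : Fin S.card → ℝ := fun i => S.equivFin.symm i
  obtain ⟨c, hc⟩ := exists_interpolating (b - 1) (a := a)
    (fun i j hij => S.equivFin.symm.injective (Subtype.ext hij))
    (fun i => by linarith [hb (S.equivFin.symm i).2]) (f ∘ a)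
  refine ⟨b - 1, c, fun s hs => ?_⟩
  simpa [a] using hc (S.equivFin ⟨s, hs⟩)

end oddPowSum

theorem monotone_pointwise_rank (M N K : ℕ) (A : Matrix (Fin M) (Fin N) ℝ)
    (f : ℝ → ℝ) (hf : K ≤ (A.map f).rank) :
    ∃ g : ℝ → ℝ, StrictMono g ∧ Continuous g ∧ Function.Bijective g ∧
      (∃ s : Finset ℝ, ∀ x ∉ s, DifferentiableAt ℝ g x) ∧
      K ≤ (A.map g).rank := by
  -- `0` is inserted so that `S` is nonempty even when `A` has no entries.
  set S : Finset ℝ := insert 0 (Finset.univ.image fun p : Fin M × Fin N => A p.1 p.2)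
  have hAS : ∀ i j, A i j ∈ S := fun i j =>
    Finset.mem_insert_of_mem (Finset.mem_image_of_mem _ (Finset.mem_univ (i, j)))
  have hS : S.card ≠ 0 := (Finset.insert_nonempty _ _).card_pos.ne'
  obtain ⟨b, c, hc⟩ := oddPowSum.exists_eqOn_finset S f
  have hmap : ∀ t, A.map (oddPowSum b fun k => c k + t)
      = A.map f + t • A.map (oddPowSum b (1 : Fin S.card → ℝ)) := by
    intro t
    ext i j
    simp [oddPowSum.add_const, hc _ (hAS i j)]
  have hpos : ∀ᶠ t in atTop, ∀ k, 0 < c k + t :=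
    eventually_all.2 fun k => (eventually_gt_atTop (-c k)).mono fun t ht => by linarith
  obtain ⟨t, htc, htK⟩ :=
    (hpos.and (atTop_le_cofinite ((A.map f).eventually_le_rank_add_smul _ hf))).exists
  refine ⟨_, oddPowSum.strictMono b hS htc, oddPowSum.continuous b _,
    oddPowSum.bijective b hS htc,
    ⟨∅, fun x _ => (oddPowSum.differentiable b _).differentiableAt⟩, ?_⟩
  rwa [hmap]
end

section
/- Let A = W Hᵀ ∈ ℝ^{M×N} with M ≤ N, where W ∈ ℝ^{M×d} has rows w_i and H ∈ ℝ^{N×d} has rows h_j. Suppose there exist M distinct column indices j_1,…,j_M such that each value ⟨w_i, h_{j_i}⟩ is distinct from all other entries of A. Then there exists a pointwise function f : ℝ → ℝ such that f(A) (entrywise application) has full rank M. -/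
theorem distinct_dot_products_full_rank (M N d : ℕ) (hMN : M ≤ N)
    (W : Matrix (Fin M) (Fin d) ℝ) (H : Matrix (Fin N) (Fin d) ℝ)
    (A : Matrix (Fin M) (Fin N) ℝ) (hA : A = W * H.transpose)
    (j : Fin M → Fin N) (hj : Function.Injective j)
    (hdistinct : ∀ i : Fin M, ∀ i' : Fin M, ∀ j' : Fin N,
      (i', j') ≠ (i, j i) → A i' j' ≠ A i (j i)) :
    ∃ f : ℝ → ℝ, (A.map f).rank = M := by
  classical
  refine ⟨fun x => if ∃ i : Fin M, A i (j i) = x then 1 else 0, ?_⟩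
  set B : Matrix (Fin M) (Fin N) ℝ :=
    Matrix.of (fun i j' => if j' = j i then (1 : ℝ) else 0) with hBdef
  have hB : A.map (fun x => if ∃ i : Fin M, A i (j i) = x then 1 else 0) = B := by
    ext i' j'
    simp only [Matrix.map_apply, hBdef, Matrix.of_apply]
    by_cases h : j' = j i'
    · subst h
      rw [if_pos ⟨i', rfl⟩, if_pos rfl]
    · rw [if_neg h, if_neg]
      rintro ⟨i, hi⟩
      have hne : (i', j') ≠ (i, j i) := by
        intro heq
        apply h
        have h1 : i' = i := congrArg Prod.fst heq
        have h2 : j' = j i := congrArg Prod.snd heq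
        rw [h2, h1]
      exact hdistinct i i' j' hne hi.symm
  rw [hB]
  have hBBt : B * B.transpose = 1 := by
    ext i i'
    simp only [Matrix.mul_apply, Matrix.transpose_apply, hBdef, Matrix.of_apply,
      ite_mul, one_mul, zero_mul]
    rw [Finset.sum_ite_eq' Finset.univ (j i)]
    simp only [Finset.mem_univ, if_true]
    by_cases h : i = i'
    · subst h; simp
    · rw [if_neg (fun hji => h (hj hji)), Matrix.one_apply_ne h]
  have h1 : (B * B.transpose).rank = M := by
    rw [hBBt, Matrix.rank_one, Fintype.card_fin]
  have h2 : (B * B.transpose).rank ≤ B.rank := Matrix.rank_mul_le_left _ _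
  have h3 : B.rank ≤ M := by
    simpa using B.rank_le_card_height
  omega
end

section
/- Let A ∈ ℝ^{N×M} have rank d, let p be a positive integer, and let A^{⊙p} denote the entrywise p-th power of A. Then rank(A^{⊙p}) ≤ min{N, M, C(d+p−1, p)}, where C(d+p−1, p) is the binomial coefficient. -/
/-!
Factor `A = B * C` through `d = rank A` columns. Expanding `(∑ₖ Bᵢₖ Cₖⱼ)ᵖ` by the multinomial
theorem writes `A^{⊙p}` as a product of two matrices whose inner index runs over the multisets
of size `p` in `Fin d`, of which there are `multichoose d p = C(d + p - 1, p)`.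
-/

namespace Matrix

variable {m n ι R : Type*}

theorem exists_eq_mul_of_rank {K : Type*} [Field K] [Fintype m] [Fintype n] (A : Matrix m n K) :
    ∃ (B : Matrix m (Fin A.rank) K) (C : Matrix (Fin A.rank) n K), A = B * C := by
  let V := Submodule.span K (Set.range A.col)
  let b : Module.Basis (Fin A.rank) K V :=
    Module.finBasisOfFinrankEq K V A.rank_eq_finrank_span_cols.symm
  let v (j : n) : V := ⟨A.col j, Submodule.subset_span (Set.mem_range_self j)⟩
  refine ⟨of fun i k => (b k : m → K) i, of fun k j => b.repr (v j) k, ?_⟩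
  ext i j
  have hv := congrArg (fun w : V => (w : m → K) i) (b.sum_repr (v j))
  simp only [Submodule.coe_sum, SetLike.val_smul, Finset.sum_apply, Pi.smul_apply,
    smul_eq_mul] at hv
  simpa [v, mul_apply, mul_comm] using hv.symm

variable [CommSemiring R] [Fintype ι] [DecidableEq ι]

theorem map_pow_mul (B : Matrix m ι R) (C : Matrix ι n R) (p : ℕ) :
    (B * C).map (· ^ p) =
      of (fun i (s : Sym ι p) => ((s : Multiset ι).map (B i)).prod) *
        of fun (s : Sym ι p) j =>
          ((s : Multiset ι).countPerms : R) * ((s : Multiset ι).map (C · j)).prod := by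
  ext i j
  rw [map_apply, mul_apply, mul_apply, Finset.sum_pow, ← Finset.sym_univ p]
  refine Finset.sum_congr rfl fun s _ => ?_
  rw [of_apply, of_apply, Sym.val_eq_coe, Multiset.prod_map_mul]
  ring

theorem rank_map_pow_mul_le [Fintype n] [StrongRankCondition R] (B : Matrix m ι R)
    (C : Matrix ι n R) (p : ℕ) :
    ((B * C).map (· ^ p)).rank ≤ (Fintype.card ι).multichoose p := by
  rw [map_pow_mul, ← Sym.card_sym_eq_multichoose]
  exact (rank_mul_le_left _ _).trans (rank_le_card_width _)

end Matrix

theorem rank_hadamard_pow_le_general (N M d p : ℕ)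
    (A : Matrix (Fin N) (Fin M) ℝ) (hA : A.rank = d) :
    (A.map (fun x => x ^ p)).rank ≤ min N (min M (Nat.choose (d + p - 1) p)) := by
  refine le_min ?_ (le_min ?_ ?_)
  · simpa using (A.map (· ^ p)).rank_le_card_height
  · simpa using (A.map (· ^ p)).rank_le_card_width
  · obtain ⟨B, C, hBC⟩ := A.exists_eq_mul_of_rank
    simpa [← hBC, hA, Nat.multichoose_eq] using Matrix.rank_map_pow_mul_le B C p

theorem rank_hadamard_pow_le (N M d p : ℕ) (hp : 0 < p)
    (A : Matrix (Fin N) (Fin M) ℝ) (hA : A.rank = d) :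
    (A.map (fun x => x ^ p)).rank ≤ min N (min M (Nat.choose (d + p - 1) p)) :=
  rank_hadamard_pow_le_general N M d p A hA
end

section
/- Let N > 1 and let A ∈ ℝ^{N×N} have N distinct columns such that a specific column, say the N-th, equals a linear combination ∑_{i=1}^{N−1} γ_i x^{(i)} of the others, and suppose no two columns of A are proportional. If the entrywise square A^{⊙2} has rank < N, then there exist α_1,…,α_N ∈ ℝ, not all zero, with ∑_{i=1}^{N−1} α_i (x^{(i)})^{⊙2} = α_N (∑_{i=1}^{N−1} γ_i x^{(i)})^{⊙2}, and the associated quadratic form matrix G (with G_{ii} = α_i − α_N γ_i², G_{ij} = −α_N γ_i γ_j for i≠j) is nonzero. -/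
theorem entrywise_square_rank_deficient_constraint (N : ℕ) (hN : 0 < N)
    (A : Matrix (Fin (N + 1)) (Fin (N + 1)) ℝ)
    (γ : Fin N → ℝ)
    (hlast : ∀ r, A r (Fin.last N) = ∑ i : Fin N, γ i * A r i.castSucc)
    (hnotprop : ∀ j k : Fin (N + 1), j ≠ k → ¬ ∃ c : ℝ, ∀ r, A r j = c * A r k)
    (hrank : (A.map (fun x => x ^ 2)).rank < N + 1) :
    ∃ α : Fin (N + 1) → ℝ,
      (¬ ∀ i, α i = 0) ∧
      (∀ r, ∑ i : Fin N, α i.castSucc * (A r i.castSucc) ^ 2 =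
        α (Fin.last N) * (∑ i : Fin N, γ i * A r i.castSucc) ^ 2) ∧
      ¬ (∀ i j : Fin N,
        (if i = j then α i.castSucc - α (Fin.last N) * γ i ^ 2
         else -(α (Fin.last N) * γ i * γ j)) = 0) := by
  set M := A.map (fun x => x ^ 2) with hM
  -- det M = 0
  have hdet : M.det = 0 := by
    by_contra hd
    have hu : IsUnit M := (Matrix.isUnit_iff_isUnit_det M).mpr (isUnit_iff_ne_zero.mpr hd)
    have := Matrix.rank_of_isUnit M hu
    rw [this] at hrank
    simp at hrank
  obtain ⟨v, hv0, hmv⟩ := (Matrix.exists_mulVec_eq_zero_iff).mpr hdet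
  set α : Fin (N + 1) → ℝ := fun j => if j = Fin.last N then -(v (Fin.last N)) else v j with hα
  have hαcast : ∀ i : Fin N, α i.castSucc = v i.castSucc := by
    intro i
    simp only [hα, if_neg (Fin.castSucc_lt_last i).ne]
  have hαlast : α (Fin.last N) = -(v (Fin.last N)) := by simp [hα]
  refine ⟨α, ?_, ?_, ?_⟩
  · intro hall
    apply hv0
    funext j
    simp only [Pi.zero_apply]
    induction j using Fin.lastCases with
    | last => have := hall (Fin.last N); rw [hαlast] at this; linarith
    | cast i => have := hall i.castSucc; rw [hαcast] at this; exact this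
  · intro r
    have h0 : ∑ j : Fin (N + 1), M r j * v j = 0 := by
      have := congrFun hmv r
      simpa [Matrix.mulVec, dotProduct] using this
    rw [Fin.sum_univ_castSucc] at h0
    have hMr : ∀ j, M r j = (A r j) ^ 2 := fun j => rfl
    have hml : M r (Fin.last N) = (∑ i : Fin N, γ i * A r i.castSucc) ^ 2 := by
      rw [hMr, hlast]
    rw [hml] at h0
    have : ∑ i : Fin N, α i.castSucc * (A r i.castSucc) ^ 2
        = ∑ i : Fin N, M r i.castSucc * v i.castSucc := by
      apply Finset.sum_congr rfl
      intro i _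
      rw [hαcast, hMr]; ring
    rw [this, hαlast]
    linarith
  · intro hG
    have hdiag : ∀ i : Fin N, α i.castSucc = α (Fin.last N) * γ i ^ 2 := by
      intro i
      have := hG i i
      rw [if_pos rfl] at this
      linarith
    by_cases hlz : α (Fin.last N) = 0
    · -- all α zero, contradiction with v ≠ 0
      apply hv0
      funext j
      simp only [Pi.zero_apply]
      induction j using Fin.lastCases with
      | last => rw [hαlast] at hlz; linarith
      | cast i =>
        have := hdiag i
        rw [hlz, zero_mul] at this
        rw [← hαcast]; exact this
    · -- γ i γ j = 0 for i ≠ j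
      have hod : ∀ i j : Fin N, i ≠ j → γ i * γ j = 0 := by
        intro i j hij
        have := hG i j
        rw [if_neg hij] at this
        have : α (Fin.last N) * γ i * γ j = 0 := by linarith
        rcases mul_eq_zero.mp this with h | h
        · rcases mul_eq_zero.mp h with h' | h'
          · exact absurd h' hlz
          · rw [h', zero_mul]
        · rw [h, mul_zero]
      by_cases hex : ∃ i : Fin N, γ i ≠ 0
      · obtain ⟨i0, hi0⟩ := hex
        have hothers : ∀ j : Fin N, j ≠ i0 → γ j = 0 := by
          intro j hj
          have := hod i0 j (fun h => hj h.symm)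
          rcases mul_eq_zero.mp this with h | h
          · exact absurd h hi0
          · exact h
        refine hnotprop (Fin.last N) i0.castSucc (Fin.castSucc_lt_last i0).ne'
          ⟨γ i0, fun r => ?_⟩
        rw [hlast r]
        rw [Finset.sum_eq_single i0]
        · intro b _ hb; rw [hothers b hb, zero_mul]
        · intro h; exact absurd (Finset.mem_univ i0) h
      · push_neg at hex
        refine hnotprop (Fin.last N) (⟨0, by omega⟩ : Fin (N + 1))
          (by simp [Fin.ext_iff]; omega) ⟨0, fun r => ?_⟩
        rw [hlast r, zero_mul]
        apply Finset.sum_eq_zero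
        intro i _
        rw [hex i, zero_mul]
end
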